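/- For every integer n ≥ 1: the number of flattened Catalan words of length n with no valley equals (n − 1)·2^(n−2) + 1 when n ≥ 2 (and equals 1 when n = 1); and for every integer k ≥ 1 with n ≥ 2k + 2, the number of flattened Catalan words of length n with exactly k valleys equals 2^(n − 2k − 2) · C(n − 1, 2k + 1), where C denotes the binomial coefficient, this number being 0 when n < 2k + 2. -/

import Mathlib

/-- `w : ℕ → ℕ` encodes a Catalan word of length `n` (0-indexed letters
`w 0, w 1, …, w (n-1)`): the first letter is `0`, each letter is at most the
previous one plus one, and `w` is normalized to vanish at positions `≥ n`. -/
def IsCatalanWord (n : ℕ) (w : ℕ → ℕ) : Prop :=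
  w 0 = 0 ∧ (∀ i, i + 1 < n → w (i + 1) ≤ w i + 1) ∧ ∀ i, n ≤ i → w i = 0

/-- `j` is the starting position of one of the maximal weakly increasing
contiguous subwords (runs of weak ascents) of the length-`n` word `w`. -/
def IsRunStart (n : ℕ) (w : ℕ → ℕ) (j : ℕ) : Prop :=
  j < n ∧ (j = 0 ∨ w j < w (j - 1))

/-- A word is flattened when the leading terms of its maximal weakly increasing
contiguous subwords, read from left to right, form a weakly increasing sequence. -/
def IsFlattened (n : ℕ) (w : ℕ → ℕ) : Prop :=
  ∀ i j, IsRunStart n w i → IsRunStart n w j → i ≤ j → w i ≤ w j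

/-- The set of flattened Catalan words of length `n`. -/
def FlatCat (n : ℕ) : Set (ℕ → ℕ) := {w | IsCatalanWord n w ∧ IsFlattened n w}

/-- Number of maximal strictly increasing contiguous subwords (runs of ascents):
`1 + #{ i : w_i ≥ w_{i+1} }`. -/
noncomputable def runsAsc (n : ℕ) (w : ℕ → ℕ) : ℕ :=
  1 + {i : ℕ | i + 1 < n ∧ w (i + 1) ≤ w i}.ncard

/-- Number of maximal weakly increasing contiguous subwords (runs of weak
ascents): `1 + #{ i : w_i > w_{i+1} }`. -/
noncomputable def wruns (n : ℕ) (w : ℕ → ℕ) : ℕ :=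
  1 + {i : ℕ | i + 1 < n ∧ w (i + 1) < w i}.ncard

/-- Number of maximal strictly decreasing contiguous subwords (runs of
descents): `1 + #{ i : w_i ≤ w_{i+1} }`. -/
noncomputable def runsDesc (n : ℕ) (w : ℕ → ℕ) : ℕ :=
  1 + {i : ℕ | i + 1 < n ∧ w i ≤ w (i + 1)}.ncard

/-- Number of maximal weakly decreasing contiguous subwords (runs of weak
descents): `1 + #{ i : w_i < w_{i+1} }`. -/
noncomputable def wrunsDesc (n : ℕ) (w : ℕ → ℕ) : ℕ :=
  1 + {i : ℕ | i + 1 < n ∧ w i < w (i + 1)}.ncard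

/-- An `ℓ`-valley `a b^ℓ (b+1)` (with `a > b`) occurring at position `i` of the
length-`n` word `w`. -/
def IsLValley (n : ℕ) (w : ℕ → ℕ) (ℓ i : ℕ) : Prop :=
  i + ℓ + 1 < n ∧ w (i + 1) < w i ∧ (∀ t, 1 ≤ t → t ≤ ℓ → w (i + t) = w (i + 1)) ∧
    w (i + ℓ + 1) = w (i + 1) + 1

/-- Number of `ℓ`-valleys of `w`. -/
noncomputable def lValleyCount (n : ℕ) (w : ℕ → ℕ) (ℓ : ℕ) : ℕ :=
  {i : ℕ | IsLValley n w ℓ i}.ncard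

/-- Number of valleys of `w` (all `ℓ`-valleys, `ℓ ≥ 1`). -/
noncomputable def valleyCount (n : ℕ) (w : ℕ → ℕ) : ℕ :=
  {p : ℕ × ℕ | 1 ≤ p.2 ∧ IsLValley n w p.2 p.1}.ncard

/-- A symmetric valley `a (a-1)^ℓ a` (with `ℓ ≥ 1`) occurring at position `i`. -/
def IsSymValley (n : ℕ) (w : ℕ → ℕ) (ℓ i : ℕ) : Prop :=
  i + ℓ + 1 < n ∧ w i = w (i + 1) + 1 ∧ (∀ t, 1 ≤ t → t ≤ ℓ → w (i + t) = w (i + 1)) ∧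
    w (i + ℓ + 1) = w i

/-- Number of symmetric valleys of `w` (over all `ℓ ≥ 1`). -/
noncomputable def symValleyCount (n : ℕ) (w : ℕ → ℕ) : ℕ :=
  {p : ℕ × ℕ | 1 ≤ p.2 ∧ IsSymValley n w p.2 p.1}.ncard

/-- An `ℓ`-peak `a (a+1)^ℓ b` (with `a ≥ b`) occurring at position `i` of the
length-`n` word `w`. -/
def IsLPeak (n : ℕ) (w : ℕ → ℕ) (ℓ i : ℕ) : Prop :=
  i + ℓ + 1 < n ∧ (∀ t, 1 ≤ t → t ≤ ℓ → w (i + t) = w i + 1) ∧ w (i + ℓ + 1) ≤ w i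

/-- Number of `ℓ`-peaks of `w`. -/
noncomputable def lPeakCount (n : ℕ) (w : ℕ → ℕ) (ℓ : ℕ) : ℕ :=
  {i : ℕ | IsLPeak n w ℓ i}.ncard

/-- Number of peaks of `w` (all `ℓ`-peaks, `ℓ ≥ 1`). -/
noncomputable def peakCount (n : ℕ) (w : ℕ → ℕ) : ℕ :=
  {p : ℕ × ℕ | 1 ≤ p.2 ∧ IsLPeak n w p.2 p.1}.ncard

/-- A symmetric peak `a (a+1)^ℓ a` (with `ℓ ≥ 1`) occurring at position `i`. -/
def IsSymPeak (n : ℕ) (w : ℕ → ℕ) (ℓ i : ℕ) : Prop :=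
  i + ℓ + 1 < n ∧ (∀ t, 1 ≤ t → t ≤ ℓ → w (i + t) = w i + 1) ∧ w (i + ℓ + 1) = w i

/-- Number of symmetric peaks of `w` (over all `ℓ ≥ 1`). -/
noncomputable def symPeakCount (n : ℕ) (w : ℕ → ℕ) : ℕ :=
  {p : ℕ × ℕ | 1 ≤ p.2 ∧ IsSymPeak n w p.2 p.1}.ncard

/-!
Flattened Catalan words are built letter by letter. If `w` has length `n + 1` and last letter
`L`, the letters that may be appended are exactly those in `[m, L + 1]`, where `m` is the
largest letter that starts a weakly increasing run of `w`: the ascent `L + 1`, the plateau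
letter `L` and `L - m` descents. Only the ascent can create a valley, and it creates one exactly
when `w` ends in an unfinished valley `a b^ℓ`; after a descent the word ends in such a valley,
and a word ending in one admits no descent.

Hence the polynomial `∑_w (X ^ (2 * valleys after an ascent) + (L - m) * X ^ (2 * valleys + 1))`
is multiplied by `X + 2` at each step, so it is `(X + 2) ^ n` on words of length `n + 1`. Sorting
the words of length `n + 2` by their last letter, the number of words with `k` valleys grows by
the coefficients of `X ^ (2k)` and `X ^ (2k + 1)` in `(X + 2) ^ n`; by induction it equals the
coefficient of `X ^ (2k + 1)` in `(X + 2) ^ n`, plus one when `k = 0`.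
-/

open Finset Function Polynomial
open scoped Classical

lemma IsCatalanWord.apply_le {n i : ℕ} {w : ℕ → ℕ} (hw : IsCatalanWord n w) (hi : i < n) :
    w i ≤ i := by
  induction i with
  | zero => simp [hw.1]
  | succ i ih => have := hw.2.1 i hi; have := ih (by omega); omega

lemma flatCat_finite (n : ℕ) : (FlatCat n).Finite := by
  refine (Set.finite_range fun (g : Fin n → Fin (n + 1)) (i : ℕ) =>
    if h : i < n then (g ⟨i, h⟩ : ℕ) else 0).subset fun w hw => ?_
  refine ⟨fun j => ⟨w j, Nat.lt_succ_of_le ((hw.1.apply_le j.2).trans j.2.le)⟩,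
    funext fun i => ?_⟩
  by_cases h : i < n
  · simp [h]
  · simp [h, hw.1.2.2 i (by omega)]

noncomputable def flatCatFinset (n : ℕ) : Finset (ℕ → ℕ) := (flatCat_finite n).toFinset

lemma mem_flatCatFinset {n : ℕ} {w : ℕ → ℕ} : w ∈ flatCatFinset n ↔ w ∈ FlatCat n :=
  Set.Finite.mem_toFinset _

lemma flatCatFinset_one : flatCatFinset 1 = {0} := by
  ext w
  rw [mem_flatCatFinset, mem_singleton]
  constructor
  · rintro ⟨⟨h0, -, hpad⟩, -⟩
    funext i
    rcases Nat.eq_zero_or_pos i with rfl | hi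
    · exact h0
    · exact hpad i hi
  · rintro rfl
    exact ⟨⟨rfl, fun i hi => by omega, fun _ _ => rfl⟩, fun _ _ _ _ _ => le_rfl⟩

lemma isRunStart_update_iff (n : ℕ) (w : ℕ → ℕ) (c j : ℕ) :
    IsRunStart (n + 2) (update w (n + 1) c) j ↔
      IsRunStart (n + 1) w j ∨ (j = n + 1 ∧ c < w n) := by
  unfold IsRunStart
  rcases lt_trichotomy j (n + 1) with hj | rfl | hj
  · rw [update_of_ne hj.ne, update_of_ne (by omega)]
    omega
  · simp only [update_self, Nat.add_sub_cancel, update_of_ne (show n ≠ n + 1 by omega), true_and]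
    omega
  · omega

lemma IsFlattened.le_of_isRunStart {n : ℕ} {w : ℕ → ℕ} (hf : IsFlattened n w) {j m : ℕ}
    (hj : IsRunStart n w j) (hjm : j ≤ m) (hm : m < n) : w j ≤ w m := by
  induction m, hjm using Nat.le_induction with
  | base => rfl
  | succ m hjm ih =>
    rcases lt_or_ge (w (m + 1)) (w m) with h | h
    · exact hf j (m + 1) hj ⟨hm, Or.inr h⟩ (by omega)
    · exact (ih (by omega)).trans h

noncomputable def runStartMax (n : ℕ) (w : ℕ → ℕ) : ℕ :=
  ((range n).filter (IsRunStart n w)).sup w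

lemma runStartMax_le_iff {n a : ℕ} {w : ℕ → ℕ} :
    runStartMax n w ≤ a ↔ ∀ j, IsRunStart n w j → w j ≤ a := by
  simp only [runStartMax, Finset.sup_le_iff, mem_filter, mem_range, and_imp]
  exact ⟨fun h j hj => h j hj.1 hj, fun h j _ hj => h j hj⟩

lemma le_runStartMax {n j : ℕ} {w : ℕ → ℕ} (hj : IsRunStart n w j) :
    w j ≤ runStartMax n w :=
  runStartMax_le_iff.1 le_rfl j hj

lemma runStartMax_le_of_isFlattened {n : ℕ} {w : ℕ → ℕ} (hf : IsFlattened (n + 1) w) :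
    runStartMax (n + 1) w ≤ w n :=
  runStartMax_le_iff.2 fun _ hj =>
    hf.le_of_isRunStart (m := n) hj (by have := hj.1; omega) (by omega)

lemma runStartMax_update {n c : ℕ} {w : ℕ → ℕ} (hc : runStartMax (n + 1) w ≤ c) :
    runStartMax (n + 2) (update w (n + 1) c) = if c < w n then c else runStartMax (n + 1) w := by
  apply le_antisymm
  · refine runStartMax_le_iff.2 fun j hj => ?_
    rcases (isRunStart_update_iff n w c j).1 hj with hj | ⟨rfl, hcn⟩
    · rw [update_of_ne hj.1.ne]
      have := le_runStartMax hj
      split_ifs <;> omega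
    · rw [update_self, if_pos hcn]
  · split_ifs with hcn
    · simpa using le_runStartMax ((isRunStart_update_iff n w c _).2 (Or.inr ⟨rfl, hcn⟩))
    · refine runStartMax_le_iff.2 fun j hj => ?_
      simpa [update_of_ne hj.1.ne] using
        le_runStartMax ((isRunStart_update_iff n w c j).2 (Or.inl hj))

/-- Appending a letter `c < w (n - 1)` to a flattened word keeps it flattened exactly when
`runStartMax n w ≤ c`, so this is the number of descents that may be appended to `w`. -/
noncomputable def descentChoices (n : ℕ) (w : ℕ → ℕ) : ℕ := w (n - 1) - runStartMax n w

lemma descentChoices_succ {n : ℕ} {w : ℕ → ℕ} :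
    descentChoices (n + 1) w = w n - runStartMax (n + 1) w := rfl

lemma descentChoices_update {n c : ℕ} {w : ℕ → ℕ} (hc : runStartMax (n + 1) w ≤ c) :
    descentChoices (n + 2) (update w (n + 1) c) =
      if c < w n then 0 else c - runStartMax (n + 1) w := by
  simp only [descentChoices, runStartMax_update hc, show n + 2 - 1 = n + 1 from rfl,
    update_self]
  split_ifs <;> omega

theorem update_mem_flatCat_iff {n c : ℕ} {w : ℕ → ℕ} (hw : w ∈ FlatCat (n + 1)) :
    update w (n + 1) c ∈ FlatCat (n + 2) ↔ c ∈ Icc (runStartMax (n + 1) w) (w n + 1) := by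
  obtain ⟨⟨h0, hstep, hpad⟩, hflat⟩ := hw
  have hmax := runStartMax_le_of_isFlattened hflat
  rw [mem_Icc]
  constructor
  · rintro ⟨⟨-, hstep', -⟩, hflat'⟩
    have hcn : c ≤ w n + 1 := by simpa [update_of_ne] using hstep' n (by omega)
    refine ⟨?_, hcn⟩
    by_cases hc : c < w n
    · refine runStartMax_le_iff.2 fun j hj => ?_
      simpa [update_of_ne hj.1.ne] using hflat' j (n + 1)
        ((isRunStart_update_iff n w c j).2 (Or.inl hj))
        ((isRunStart_update_iff n w c _).2 (Or.inr ⟨rfl, hc⟩)) hj.1.le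
    · omega
  · rintro ⟨hmc, hcn⟩
    refine ⟨⟨by simpa using h0, fun i hi => ?_, fun i hi => ?_⟩, fun i j hi hj hij => ?_⟩
    · rcases (show i + 1 < n + 1 ∨ i = n by omega) with hi | rfl
      · rw [update_of_ne (by omega), update_of_ne (by omega)]
        exact hstep i hi
      · simpa using hcn
    · rw [update_of_ne (by omega), hpad i (by omega)]
    · rw [isRunStart_update_iff] at hi hj
      rcases hj with hj | ⟨rfl, -⟩
      · rcases hi with hi | ⟨rfl, -⟩
        · rw [update_of_ne hi.1.ne, update_of_ne hj.1.ne]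
          exact hflat i j hi hj hij
        · have := hj.1; omega
      · rcases hi with hi | ⟨rfl, -⟩
        · rw [update_of_ne hi.1.ne, update_self]
          exact (le_runStartMax hi).trans hmc
        · rfl

lemma update_zero_mem_flatCat {n : ℕ} {v : ℕ → ℕ} (hv : v ∈ FlatCat (n + 2)) :
    update v (n + 1) 0 ∈ FlatCat (n + 1) := by
  obtain ⟨⟨h0, hstep, hpad⟩, hflat⟩ := hv
  have hstart : ∀ j, IsRunStart (n + 1) (update v (n + 1) 0) j → IsRunStart (n + 2) v j := by
    intro j hj
    simpa using (isRunStart_update_iff n (update v (n + 1) 0) (v (n + 1)) j).2 (Or.inl hj)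
  refine ⟨⟨by simpa using h0, fun i hi => ?_, fun i hi => ?_⟩, fun i j hi hj hij => ?_⟩
  · rw [update_of_ne (by omega), update_of_ne (by omega)]
    exact hstep i (by omega)
  · rw [update_apply]
    split_ifs
    · rfl
    · exact hpad i (by omega)
  · rw [update_of_ne hi.1.ne, update_of_ne hj.1.ne]
    exact hflat i j (hstart i hi) (hstart j hj) hij

-- Words are padded with zeros, so `update v (n + 1) 0` deletes the last letter of `v`.
theorem sum_flatCatFinset_succ_succ {M : Type*} [AddCommMonoid M] (n : ℕ)
    (F : (ℕ → ℕ) → M) :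
    ∑ v ∈ flatCatFinset (n + 2), F v =
      ∑ w ∈ flatCatFinset (n + 1), ∑ c ∈ Icc (runStartMax (n + 1) w) (w n + 1),
        F (update w (n + 1) c) := by
  rw [sum_sigma']
  refine sum_bij' (fun v _ => ⟨update v (n + 1) 0, v (n + 1)⟩)
    (fun p _ => update p.1 (n + 1) p.2) (fun v hv => ?_) (fun p hp => ?_) (fun v _ => ?_)
    (fun p hp => ?_) (fun v _ => by simp)
  · have hw := update_zero_mem_flatCat (mem_flatCatFinset.1 hv)
    refine mem_sigma.2 ⟨mem_flatCatFinset.2 hw, (update_mem_flatCat_iff hw).1 ?_⟩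
    simpa using mem_flatCatFinset.1 hv
  · obtain ⟨hw, hc⟩ := mem_sigma.1 hp
    exact mem_flatCatFinset.2 ((update_mem_flatCat_iff (mem_flatCatFinset.1 hw)).2 hc)
  · simp
  · have hpad := (mem_flatCatFinset.1 (mem_sigma.1 hp).1).1.2.2 (n + 1) (by omega)
    simp [← hpad]

/-- `w` ends with `w i` followed by a plateau of letters `w (i + 1) < w i`, i.e. with a valley
that the letter `w (i + 1) + 1` would complete. -/
def IsOpenValleyAt (n : ℕ) (w : ℕ → ℕ) (i : ℕ) : Prop :=
  i + 1 < n ∧ w (i + 1) < w i ∧ ∀ t, i < t → t < n → w t = w (i + 1)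

def HasOpenValley (n : ℕ) (w : ℕ → ℕ) : Prop := ∃ i, IsOpenValleyAt n w i

lemma IsOpenValleyAt.unique {n i j : ℕ} {w : ℕ → ℕ} (hi : IsOpenValleyAt n w i)
    (hj : IsOpenValleyAt n w j) : i = j := by
  wlog hij : i < j generalizing i j
  · rcases eq_or_lt_of_le (not_lt.1 hij) with h | h
    · exact h.symm
    · exact (this hj hi h).symm
  have := hi.2.2 j hij (by have := hj.1; omega)
  have := hi.2.2 (j + 1) (by omega) hj.1
  have := hj.2.1
  omega

lemma descentChoices_eq_zero_of_hasOpenValley {n : ℕ} {w : ℕ → ℕ}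
    (h : HasOpenValley (n + 1) w) : descentChoices (n + 1) w = 0 := by
  obtain ⟨i, hi, hdesc, hplateau⟩ := h
  have hstart := le_runStartMax (show IsRunStart (n + 1) w (i + 1) from ⟨hi, Or.inr hdesc⟩)
  have hlast := hplateau n (by omega) (by omega)
  simp only [descentChoices, Nat.add_sub_cancel]
  omega

lemma hasOpenValley_update_iff (n : ℕ) (w : ℕ → ℕ) (c : ℕ) :
    HasOpenValley (n + 2) (update w (n + 1) c) ↔
      c < w n ∨ (c = w n ∧ HasOpenValley (n + 1) w) := by
  have hw : ∀ t, t < n + 1 → update w (n + 1) c t = w t := fun t ht => update_of_ne ht.ne _ _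
  constructor
  · rintro ⟨i, hi, hdesc, hplateau⟩
    rcases (show i = n ∨ i < n by omega) with rfl | hin
    · left
      simpa [hw] using hdesc
    · have hc := hplateau (n + 1) (by omega) (by omega)
      have hn := hplateau n hin (by omega)
      rw [update_self, hw _ (by omega)] at hc
      rw [hw _ (by omega), hw _ (by omega)] at hn
      rw [hw _ (by omega), hw _ (by omega)] at hdesc
      refine Or.inr ⟨by omega, i, by omega, hdesc, fun t ht ht' => ?_⟩
      simpa [hw t ht', hw (i + 1) (by omega)] using hplateau t ht (by omega)
  · rintro (hc | ⟨rfl, i, hi, hdesc, hplateau⟩)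
    · refine ⟨n, by omega, by simpa [hw] using hc, fun t ht ht' => ?_⟩
      obtain rfl : t = n + 1 := by omega
      rfl
    · refine ⟨i, by omega, by simpa [hw _ hi, hw i (by omega)] using hdesc, fun t ht ht' => ?_⟩
      rw [hw (i + 1) hi]
      rcases (show t < n + 1 ∨ t = n + 1 by omega) with ht' | rfl
      · rw [hw t ht']
        exact hplateau t ht ht'
      · rw [update_self]
        exact hplateau n (by omega) (by omega)

def valleySet (n : ℕ) (w : ℕ → ℕ) : Set (ℕ × ℕ) :=
  {p | 1 ≤ p.2 ∧ IsLValley n w p.2 p.1}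

lemma valleyCount_eq_ncard_valleySet (n : ℕ) (w : ℕ → ℕ) :
    valleyCount n w = (valleySet n w).ncard := rfl

lemma valleySet_finite (n : ℕ) (w : ℕ → ℕ) : (valleySet n w).Finite :=
  (range n ×ˢ range n).finite_toSet.subset fun p hp => by
    have := hp.2.1
    simp only [coe_product, Set.mem_prod, coe_range, Set.mem_Iio]
    omega

lemma isLValley_update_iff_of_lt {n c l i : ℕ} {w : ℕ → ℕ} (h : i + l + 1 < n + 1) :
    IsLValley (n + 2) (update w (n + 1) c) l i ↔ IsLValley (n + 1) w l i := by
  have hw : ∀ t, t ≤ i + l + 1 → update w (n + 1) c t = w t :=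
    fun t ht => update_of_ne (by omega) _ _
  unfold IsLValley
  rw [hw i (by omega), hw (i + 1) (by omega), hw (i + l + 1) le_rfl]
  refine and_congr (by omega) (and_congr Iff.rfl (and_congr (forall_congr' fun t => ?_) Iff.rfl))
  exact ⟨fun ht h1 h2 => by rw [← hw _ (by omega)]; exact ht h1 h2,
    fun ht h1 h2 => by rw [hw _ (by omega)]; exact ht h1 h2⟩

lemma isLValley_update_iff_of_eq {n c l i : ℕ} {w : ℕ → ℕ} (h : i + l = n) (hl : 1 ≤ l) :
    IsLValley (n + 2) (update w (n + 1) c) l i ↔ IsOpenValleyAt (n + 1) w i ∧ c = w n + 1 := by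
  have hw : ∀ t, t < n + 1 → update w (n + 1) c t = w t := fun t ht => update_of_ne ht.ne _ _
  unfold IsLValley IsOpenValleyAt
  rw [hw i (by omega), hw (i + 1) (by omega), show i + l + 1 = n + 1 by omega, update_self]
  constructor
  · rintro ⟨-, hdesc, hplateau, hc⟩
    have hplateau' : ∀ t, i < t → t < n + 1 → w t = w (i + 1) := fun t ht ht' => by
      simpa [show i + (t - i) = t by omega, hw t ht'] using hplateau (t - i) (by omega) (by omega)
    exact ⟨⟨by omega, hdesc, hplateau'⟩, by rw [hplateau' n (by omega) (by omega), hc]⟩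
  · rintro ⟨⟨-, hdesc, hplateau⟩, hc⟩
    refine ⟨by omega, hdesc, fun t ht ht' => ?_, by rw [hc, hplateau n (by omega) (by omega)]⟩
    rw [hw _ (by omega)]
    exact hplateau _ (by omega) (by omega)

lemma mem_valleySet_update_iff {n c i l : ℕ} {w : ℕ → ℕ} :
    (i, l) ∈ valleySet (n + 2) (update w (n + 1) c) ↔
      (i, l) ∈ valleySet (n + 1) w ∨
        (i + l = n ∧ IsOpenValleyAt (n + 1) w i ∧ c = w n + 1) := by
  simp only [valleySet, Set.mem_ofPred_eq]
  rcases lt_or_ge (i + l + 1) (n + 1) with h | h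
  · rw [isLValley_update_iff_of_lt h]
    exact ⟨Or.inl, by rintro (h' | ⟨h', -⟩) <;> omega⟩
  constructor
  · rintro ⟨hl, hv⟩
    have hil : i + l = n := by have := hv.1; omega
    exact Or.inr ⟨hil, (isLValley_update_iff_of_eq hil hl).1 hv⟩
  · rintro (⟨-, hv⟩ | ⟨hil, hopen, hc⟩)
    · have := hv.1; omega
    · have hl : 1 ≤ l := by have := hopen.1; omega
      exact ⟨hl, (isLValley_update_iff_of_eq hil hl).2 ⟨hopen, hc⟩⟩

lemma valleyCount_update (n : ℕ) (w : ℕ → ℕ) (c : ℕ) :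
    valleyCount (n + 2) (update w (n + 1) c) =
      valleyCount (n + 1) w + if c = w n + 1 ∧ HasOpenValley (n + 1) w then 1 else 0 := by
  simp only [valleyCount_eq_ncard_valleySet]
  split_ifs with h
  · obtain ⟨hc, i, hi⟩ := h
    have hset : valleySet (n + 2) (update w (n + 1) c) =
        insert (i, n - i) (valleySet (n + 1) w) := by
      ext ⟨j, l⟩
      rw [mem_valleySet_update_iff, Set.mem_insert_iff, Prod.mk.injEq]
      constructor
      · rintro (h | ⟨hjl, hj, -⟩)
        · exact Or.inr h
        · obtain rfl := hj.unique hi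
          exact Or.inl ⟨rfl, by omega⟩
      · rintro (⟨rfl, rfl⟩ | h)
        · exact Or.inr ⟨by have := hi.1; omega, hi, hc⟩
        · exact Or.inl h
    rw [hset, Set.ncard_insert_of_notMem (fun h => by have := h.2.1; omega) (valleySet_finite _ _)]
  · congr 1
    ext ⟨j, l⟩
    rw [mem_valleySet_update_iff]
    exact or_iff_left fun ⟨_, hopen, hc⟩ => h ⟨hc, j, hopen⟩

lemma sum_Icc_succ_eq_sum_Ico_add_add {M : Type*} [AddCommMonoid M] {a b : ℕ} (h : a ≤ b)
    (f : ℕ → M) : ∑ c ∈ Icc a (b + 1), f c = ∑ c ∈ Ico a b, f c + f b + f (b + 1) := by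
  rw [sum_Icc_succ_top (by omega), ← Ico_add_one_right_eq_Icc, sum_Ico_succ_top h]

noncomputable def upValleyCount (n : ℕ) (w : ℕ → ℕ) : ℕ :=
  valleyCount n w + if HasOpenValley n w then 1 else 0

/-- The extensions of `w` by an ascent and by each of its `descentChoices` descents, recorded
at the exponents `2 * (valleys after the ascent)` and `2 * (valleys after a descent) + 1`. -/
noncomputable def valleyPoly (n : ℕ) (w : ℕ → ℕ) : ℕ[X] :=
  X ^ (2 * upValleyCount n w) + C (descentChoices n w) * X ^ (2 * valleyCount n w + 1)

lemma coeff_valleyPoly_two_mul (n k : ℕ) (w : ℕ → ℕ) :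
    (valleyPoly n w).coeff (2 * k) = if upValleyCount n w = k then 1 else 0 := by
  simp only [valleyPoly, coeff_add, coeff_X_pow, coeff_C_mul]
  split_ifs <;> omega

lemma coeff_valleyPoly_two_mul_add_one (n k : ℕ) (w : ℕ → ℕ) :
    (valleyPoly n w).coeff (2 * k + 1) = if valleyCount n w = k then descentChoices n w else 0 := by
  simp only [valleyPoly, coeff_add, coeff_X_pow, coeff_C_mul]
  split_ifs <;> omega

section Extension

variable {n c : ℕ} {w : ℕ → ℕ}

lemma valleyCount_update_of_le (hc : c ≤ w n) :
    valleyCount (n + 2) (update w (n + 1) c) = valleyCount (n + 1) w := by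
  simp [valleyCount_update, show c ≠ w n + 1 by omega]

lemma valleyCount_update_succ :
    valleyCount (n + 2) (update w (n + 1) (w n + 1)) = upValleyCount (n + 1) w := by
  simp [valleyCount_update, upValleyCount]

lemma valleyPoly_update_of_lt (hmc : runStartMax (n + 1) w ≤ c) (hc : c < w n) :
    valleyPoly (n + 2) (update w (n + 1) c) = X ^ (2 * (valleyCount (n + 1) w + 1)) := by
  have hopen := (hasOpenValley_update_iff n w c).2 (Or.inl hc)
  simp [valleyPoly, upValleyCount, valleyCount_update, hopen, descentChoices_update hmc, hc,
    show c ≠ w n + 1 by omega]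

lemma valleyPoly_update_self (hmax : runStartMax (n + 1) w ≤ w n) :
    valleyPoly (n + 2) (update w (n + 1) (w n)) = valleyPoly (n + 1) w := by
  simp [valleyPoly, upValleyCount, valleyCount_update, hasOpenValley_update_iff,
    descentChoices_update hmax, descentChoices_succ]

lemma valleyPoly_update_succ (hmax : runStartMax (n + 1) w ≤ w n) :
    valleyPoly (n + 2) (update w (n + 1) (w n + 1)) =
      X ^ (2 * upValleyCount (n + 1) w) +
        C (descentChoices (n + 1) w + 1) * X ^ (2 * upValleyCount (n + 1) w + 1) := by
  simp [valleyPoly, upValleyCount, valleyCount_update, hasOpenValley_update_iff,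
    descentChoices_update (hmax.trans (Nat.le_succ _)), descentChoices_succ,
    Nat.sub_add_comm hmax]

lemma sum_valleyPoly_update (hw : w ∈ FlatCat (n + 1)) :
    ∑ c ∈ Icc (runStartMax (n + 1) w) (w n + 1), valleyPoly (n + 2) (update w (n + 1) c) =
      (X + C 2) * valleyPoly (n + 1) w := by
  have hmax := runStartMax_le_of_isFlattened hw.2
  rw [sum_Icc_succ_eq_sum_Ico_add_add hmax, valleyPoly_update_self hmax,
    valleyPoly_update_succ hmax,
    sum_congr rfl fun c hc => valleyPoly_update_of_lt (mem_Ico.1 hc).1 (mem_Ico.1 hc).2,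
    sum_const, Nat.card_Ico, ← descentChoices_succ, nsmul_eq_mul]
  simp only [valleyPoly, upValleyCount]
  by_cases hopen : HasOpenValley (n + 1) w
  · simp [hopen, descentChoices_eq_zero_of_hasOpenValley hopen]
    ring
  · simp [hopen]
    ring

lemma sum_boole_valleyCount_update (hw : w ∈ FlatCat (n + 1)) (k : ℕ) :
    ∑ c ∈ Icc (runStartMax (n + 1) w) (w n + 1),
        (if valleyCount (n + 2) (update w (n + 1) c) = k then 1 else 0) =
      (if valleyCount (n + 1) w = k then 1 else 0) + (valleyPoly (n + 1) w).coeff (2 * k) +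
        (valleyPoly (n + 1) w).coeff (2 * k + 1) := by
  have hmax := runStartMax_le_of_isFlattened hw.2
  rw [sum_Icc_succ_eq_sum_Ico_add_add hmax, coeff_valleyPoly_two_mul,
    coeff_valleyPoly_two_mul_add_one,
    sum_congr rfl fun c hc => by rw [valleyCount_update_of_le (mem_Ico.1 hc).2.le],
    sum_const, Nat.card_Ico, ← descentChoices_succ, smul_eq_mul, valleyCount_update_of_le le_rfl,
    valleyCount_update_succ]
  split_ifs <;> omega

end Extension

lemma valleyCount_one (w : ℕ → ℕ) : valleyCount 1 w = 0 := by
  rw [valleyCount_eq_ncard_valleySet, Set.ncard_eq_zero (valleySet_finite _ _)]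
  exact Set.eq_empty_of_forall_notMem fun p hp => by have := hp.2.1; omega

noncomputable def flatCatValleyPoly (n : ℕ) : ℕ[X] := ∑ w ∈ flatCatFinset n, valleyPoly n w

lemma flatCatValleyPoly_succ_succ (n : ℕ) :
    flatCatValleyPoly (n + 2) = (X + C 2) * flatCatValleyPoly (n + 1) := by
  rw [flatCatValleyPoly, sum_flatCatFinset_succ_succ, flatCatValleyPoly, mul_sum]
  exact sum_congr rfl fun w hw => sum_valleyPoly_update (mem_flatCatFinset.1 hw)

lemma flatCatValleyPoly_succ (n : ℕ) : flatCatValleyPoly (n + 1) = (X + C 2) ^ n := by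
  induction n with
  | zero =>
    have hopen : ¬HasOpenValley 1 0 := fun ⟨_, hi, _⟩ => by omega
    simp [flatCatValleyPoly, flatCatFinset_one, valleyPoly, upValleyCount, hopen, valleyCount_one,
      descentChoices]
  | succ n ih => rw [flatCatValleyPoly_succ_succ, ih, pow_succ']

lemma card_filter_valleyCount_succ_succ (n k : ℕ) :
    #{w ∈ flatCatFinset (n + 2) | valleyCount (n + 2) w = k} =
      #{w ∈ flatCatFinset (n + 1) | valleyCount (n + 1) w = k} +
        (flatCatValleyPoly (n + 1)).coeff (2 * k) +
        (flatCatValleyPoly (n + 1)).coeff (2 * k + 1) := by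
  simp only [card_filter, flatCatValleyPoly, finsetSum_coeff, ← sum_add_distrib]
  rw [sum_flatCatFinset_succ_succ]
  exact sum_congr rfl fun w hw => sum_boole_valleyCount_update (mem_flatCatFinset.1 hw) k

lemma card_filter_valleyCount (n k : ℕ) :
    #{w ∈ flatCatFinset (n + 1) | valleyCount (n + 1) w = k} =
      ((X + C 2) ^ n).coeff (2 * k + 1) + if k = 0 then 1 else 0 := by
  induction n with
  | zero =>
    rw [pow_zero, coeff_one, if_neg (by omega), zero_add, zero_add, flatCatFinset_one,
      filter_singleton, valleyCount_one]
    split_ifs <;> simp_all [eq_comm]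
  | succ n ih =>
    rw [card_filter_valleyCount_succ_succ, ih, flatCatValleyPoly_succ, pow_succ']
    simp [add_mul, coeff_X_mul]
    ring

theorem ncard_flatCat_valleyCount (n k : ℕ) :
    {w ∈ FlatCat (n + 1) | valleyCount (n + 1) w = k}.ncard =
      2 ^ (n - (2 * k + 1)) * n.choose (2 * k + 1) + if k = 0 then 1 else 0 := by
  have hset : {w ∈ FlatCat (n + 1) | valleyCount (n + 1) w = k} =
      ↑({w ∈ flatCatFinset (n + 1) | valleyCount (n + 1) w = k}) := by
    ext w
    simp [mem_flatCatFinset]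
  rw [hset, Set.ncard_coe_finset, card_filter_valleyCount, coeff_X_add_C_pow, Nat.cast_id]

/-- Counting flattened Catalan words of length `n` by their number of valleys:
no valley gives `(n-1)·2^(n-2) + 1` words for `n ≥ 2` (and `1` word for `n = 1`);
exactly `k ≥ 1` valleys gives `2^(n - 2k - 2) · C(n-1, 2k+1)` words when
`n ≥ 2k + 2`, and `0` words when `n < 2k + 2`. -/
theorem flatCat_valleyCount_card (n : ℕ) (hn : 1 ≤ n) :
    (2 ≤ n → {w ∈ FlatCat n | valleyCount n w = 0}.ncard =
      (n - 1) * 2 ^ (n - 2) + 1) ∧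
    (n = 1 → {w ∈ FlatCat n | valleyCount n w = 0}.ncard = 1) ∧
    (∀ k, 1 ≤ k → 2 * k + 2 ≤ n →
      {w ∈ FlatCat n | valleyCount n w = k}.ncard =
        2 ^ (n - (2 * k + 2)) * Nat.choose (n - 1) (2 * k + 1)) ∧
    (∀ k, 1 ≤ k → n < 2 * k + 2 →
      {w ∈ FlatCat n | valleyCount n w = k}.ncard = 0) := by
  obtain ⟨n, rfl⟩ := Nat.exists_eq_add_of_le' hn
  simp only [ncard_flatCat_valleyCount]
  refine ⟨fun h => ?_, fun h => ?_, fun k hk hkn => ?_, fun k hk hkn => ?_⟩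
  · obtain ⟨n, rfl⟩ := Nat.exists_eq_add_of_le' (show 1 ≤ n by omega)
    simp [mul_comm]
  · simp [show n = 0 by omega]
  · rw [if_neg (by omega), add_zero, Nat.add_sub_cancel,
      show n + 1 - (2 * k + 2) = n - (2 * k + 1) by omega]
  · rw [Nat.choose_eq_zero_of_lt (show n < 2 * k + 1 by omega), if_neg (by omega)]
    rfl
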